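/- Fix a finite population x : Fin N → ℝ with N ≥ 1 and real bounds a < b such that a ≤ x i ≤ b for all i. Let S be a uniformly random n-element subset of Fin N with 1 ≤ n ≤ N, let X̄ = (1/n) Σ_{i ∈ S} x i be the sample mean, and let μ = (1/N) Σ_i x i be the population mean. Then for every ε > 0, Pr[X̄ − μ ≥ ε] ≤ exp(−2 n ε² / ((1 − (n − 1)/N) · (b − a)²)). -/

import Mathlib

/-!
Let `Z(S)` be the population mean minus the mean of the items outside `S`. As a uniformly random
sample grows one item at a time, `Z` is a martingale: adding a uniformly drawn unsampled item to a
`k`-sample changes `Z` by that item's deviation from the unsampled mean divided by `N - k - 1`.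
Hoeffding's lemma therefore bounds the conditional moment generating function of each increment by
`exp (t² (b - a)² / (8 (N - k - 1)²))`; in counting form, conditioning on the first `k` items is
the identity `𝔼_{|S| = k+1} f S = 𝔼_{|T| = k} 𝔼_{j ∉ T} f (insert j T)`. Bounding
`∑_{k < n} (N - k - 1)⁻²` by Serfling's telescoping estimate gives the factor `1 - (n - 1) / N`,
and a Chernoff bound finishes, since `Z(S) = n / (N - n) · (X̄ - μ)` for `|S| = n`.
-/

open Real
open scoped BigOperators

namespace Finset

lemma expect_exp_mul_sub_expect_le {ι : Type*} (J : Finset ι) (y : ι → ℝ) {c d : ℝ}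
    (hy : ∀ j ∈ J, y j ∈ Set.Icc c d) (t : ℝ) :
    𝔼 j ∈ J, exp (t * (y j - 𝔼 i ∈ J, y i)) ≤ exp ((d - c) ^ 2 * t ^ 2 / 8) := by
  rcases J.eq_empty_or_nonempty with rfl | hJ
  · simpa using (exp_pos _).le
  have : Nonempty J := hJ.to_subtype
  let _ : MeasurableSpace J := ⊤
  have : DiscreteMeasurableSpace J := ⟨fun _ => trivial⟩
  let μ := (PMF.uniformOfFintype J).toMeasure
  have integral_eq_expect (f : ι → ℝ) : ∫ j, f j ∂μ = 𝔼 i ∈ J, f i := by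
    simp [μ, PMF.integral_eq_sum, expect_eq_sum_div_card, ← mul_sum, div_eq_inv_mul, sum_attach]
  have hoeffding := (ProbabilityTheory.hasSubgaussianMGF_of_mem_Icc (μ := μ)
    (X := fun j : J => y j) (measurable_of_countable _).aemeasurable
    (MeasureTheory.ae_of_all _ fun j => hy j j.2)).mgf_le t
  simp only [ProbabilityTheory.mgf, integral_eq_expect] at hoeffding
  calc 𝔼 j ∈ J, exp (t * (y j - 𝔼 i ∈ J, y i))
      = ∫ j, exp (t * (y j - 𝔼 i ∈ J, y i)) ∂μ := (integral_eq_expect _).symm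
    _ ≤ _ := hoeffding
    _ = exp ((d - c) ^ 2 * t ^ 2 / 8) := by
      push_cast
      rw [norm_eq_abs, div_pow, sq_abs]
      ring_nf

lemma card_filter_div_card_le_exp {β : Type*} (P : Finset β) (g : β → ℝ) {σ2 : ℝ} (hσ2 : 0 < σ2)
    (hmgf : ∀ t, 0 ≤ t → 𝔼 S ∈ P, exp (t * g S) ≤ exp (σ2 * t ^ 2 / 2)) {r : ℝ} (hr : 0 ≤ r) :
    (#{S ∈ P | r ≤ g S} : ℝ) / #P ≤ exp (-r ^ 2 / (2 * σ2)) := by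
  rcases P.eq_empty_or_nonempty with rfl | hP
  · simpa using (exp_pos _).le
  set t := r / σ2 with ht_def
  have ht : 0 ≤ t := by positivity
  have markov : (#{S ∈ P | r ≤ g S} : ℝ) * exp (t * r) ≤ #P * exp (σ2 * t ^ 2 / 2) :=
    calc (#{S ∈ P | r ≤ g S} : ℝ) * exp (t * r)
        = ∑ S ∈ P with r ≤ g S, exp (t * r) := by rw [sum_const, nsmul_eq_mul]
      _ ≤ ∑ S ∈ P with r ≤ g S, exp (t * g S) :=
          sum_le_sum fun S hS => exp_le_exp.2 (mul_le_mul_of_nonneg_left (mem_filter.1 hS).2 ht)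
      _ ≤ ∑ S ∈ P, exp (t * g S) :=
          sum_le_sum_of_subset_of_nonneg (filter_subset _ _) fun _ _ _ => (exp_pos _).le
      _ = #P * 𝔼 S ∈ P, exp (t * g S) := (card_mul_expect _ _).symm
      _ ≤ #P * exp (σ2 * t ^ 2 / 2) := by gcongr; exact hmgf t ht
  have hexp : exp (σ2 * t ^ 2 / 2) = exp (-r ^ 2 / (2 * σ2)) * exp (t * r) := by
    rw [← exp_add, ht_def]
    congr 1
    field_simp
    ring
  rw [div_le_iff₀ (by exact_mod_cast hP.card_pos), ← mul_le_mul_iff_left₀ (exp_pos (t * r))]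
  linarith [hexp ▸ markov]

lemma expect_erase_eq_expect_sub {ι K : Type*} [DecidableEq ι] [Field K] [CharZero K]
    {s : Finset ι} {j : ι} (hj : j ∈ s) (hs : 1 < #s) (x : ι → K) :
    𝔼 i ∈ s.erase j, x i = 𝔼 i ∈ s, x i - (x j - 𝔼 i ∈ s, x i) / (#s - 1) := by
  have hs' : ((#s : ℕ) : K) - 1 ≠ 0 := by
    rw [sub_ne_zero]; exact_mod_cast hs.ne'
  have hs0 : ((#s : ℕ) : K) ≠ 0 := by exact_mod_cast (zero_lt_one.trans hs).ne'
  rw [expect_eq_sum_div_card, expect_eq_sum_div_card, sum_erase_eq_sub hj, card_erase_of_mem hj,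
    Nat.cast_sub (by omega), Nat.cast_one]
  field_simp
  ring

section PowersetCard

variable {ι : Type*} [DecidableEq ι]

lemma sum_powersetCard_sum_sdiff_insert {M : Type*} [AddCommMonoid M] (s : Finset ι) (k : ℕ)
    (f : Finset ι → M) :
    ∑ T ∈ s.powersetCard k, ∑ j ∈ s \ T, f (insert j T) =
      (k + 1) • ∑ S ∈ s.powersetCard (k + 1), f S := by
  have h : ∀ S ∈ s.powersetCard (k + 1), (k + 1) • f S = ∑ _j ∈ S, f S := by
    intro S hS
    rw [sum_const, (mem_powersetCard.1 hS).2]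
  rw [smul_sum, sum_congr rfl h, sum_sigma', sum_sigma']
  refine sum_nbij' (fun p => ⟨insert p.2 p.1, p.2⟩) (fun p => ⟨p.1.erase p.2, p.2⟩)
    ?_ ?_ ?_ ?_ ?_
  · rintro ⟨T, j⟩ h
    simp only [mem_sigma, mem_powersetCard, mem_sdiff] at h ⊢
    exact ⟨⟨insert_subset h.2.1 h.1.1, by rw [card_insert_of_notMem h.2.2, h.1.2]⟩,
      mem_insert_self j T⟩
  · rintro ⟨S, j⟩ h
    simp only [mem_sigma, mem_powersetCard, mem_sdiff] at h ⊢
    exact ⟨⟨(erase_subset j S).trans h.1.1, by rw [card_erase_of_mem h.2, h.1.2]; rfl⟩,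
      h.1.1 h.2, notMem_erase j S⟩
  · rintro ⟨T, j⟩ h
    simp only [mem_sigma, mem_sdiff] at h
    simp [erase_insert h.2.2]
  · rintro ⟨S, j⟩ h
    simp only [mem_sigma] at h
    simp [insert_erase h.2]
  · simp

lemma expect_powersetCard_succ {K : Type*} [Semifield K] [CharZero K] (s : Finset ι) (k : ℕ)
    (f : Finset ι → K) :
    𝔼 S ∈ s.powersetCard (k + 1), f S =
      𝔼 T ∈ s.powersetCard k, 𝔼 j ∈ s \ T, f (insert j T) := by
  have hcard : ∀ T ∈ s.powersetCard k, #(s \ T) = #s - k := fun T hT => by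
    rw [card_sdiff_of_subset (mem_powersetCard.1 hT).1, (mem_powersetCard.1 hT).2]
  have hchoose : ((#s).choose (k + 1) : K) * (k + 1) = (#s).choose k * (#s - k : ℕ) := by
    exact_mod_cast Nat.choose_succ_right_eq (#s) k
  calc 𝔼 S ∈ s.powersetCard (k + 1), f S
      = (∑ S ∈ s.powersetCard (k + 1), f S) / (#s).choose (k + 1) := by
        rw [expect_eq_sum_div_card, card_powersetCard]
    _ = (∑ T ∈ s.powersetCard k, ∑ j ∈ s \ T, f (insert j T)) /
          ((#s - k : ℕ) * (#s).choose k) := by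
        rw [sum_powersetCard_sum_sdiff_insert, nsmul_eq_mul, mul_comm _ ((#s).choose k : K),
          ← hchoose, mul_comm _ ((k : K) + 1)]
        push_cast
        rw [mul_div_mul_left _ _ (Nat.cast_add_one_ne_zero k)]
    _ = 𝔼 T ∈ s.powersetCard k, 𝔼 j ∈ s \ T, f (insert j T) := by
        rw [expect_eq_sum_div_card, card_powersetCard, ← div_div, sum_div]
        refine congrArg (· / _) (sum_congr rfl fun T hT => ?_)
        rw [expect_eq_sum_div_card, hcard T hT]

end PowersetCard

end Finset

open Finset

section Serfling

variable {α : Type*} [Fintype α] [DecidableEq α] {x : α → ℝ} {a b : ℝ}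

noncomputable def serflingMartingale (x : α → ℝ) (S : Finset α) : ℝ :=
  𝔼 i, x i - 𝔼 i ∈ Sᶜ, x i

lemma serflingMartingale_insert (x : α → ℝ) {T : Finset α} {j : α} (hj : j ∉ T)
    (hT : 1 < #Tᶜ) :
    serflingMartingale x (insert j T) =
      serflingMartingale x T + (x j - 𝔼 i ∈ Tᶜ, x i) / (#Tᶜ - 1) := by
  rw [serflingMartingale, serflingMartingale, compl_insert,
    expect_erase_eq_expect_sub (mem_compl.2 hj) hT]
  ring

lemma card_compl_mul_serflingMartingale (x : α → ℝ) (S : Finset α) :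
    #Sᶜ * serflingMartingale x S = #S * (𝔼 i ∈ S, x i - 𝔼 i, x i) := by
  have hN : (#(univ : Finset α) : ℝ) = #S + #Sᶜ := by
    exact_mod_cast (card_add_card_compl S).symm
  rw [serflingMartingale]
  linear_combination card_mul_expect univ x - (𝔼 i, x i) * hN - card_mul_expect Sᶜ x -
    card_mul_expect S x - sum_add_sum_compl S x

/-- Serfling's closed-form upper bound for `∑_{i < k} (N - i - 1)⁻²`; `(b - a)² / 4` times it is
the variance proxy of `serflingMartingale` on `k`-subsets. -/
noncomputable def serflingVarianceFactor (N k : ℕ) : ℝ := k * (N - k + 1) / (N * (N - k) ^ 2)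

lemma serflingVarianceFactor_add_le_succ {N k : ℕ} (hk : k + 1 < N) :
    serflingVarianceFactor N k + 1 / ((N : ℝ) - k - 1) ^ 2 ≤ serflingVarianceFactor N (k + 1) := by
  have hk' : (k : ℝ) + 1 < N := by exact_mod_cast hk
  have h1 : (0 : ℝ) < N - k - 1 := by linarith
  have h2 : (N : ℝ) - k ≠ 0 := by linarith
  have h3 : (N : ℝ) ≠ 0 := by linarith
  have hgap : serflingVarianceFactor N (k + 1) -
      (serflingVarianceFactor N k + 1 / ((N : ℝ) - k - 1) ^ 2) =
        k / (N * (N - k) ^ 2 * (N - k - 1)) := by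
    rw [serflingVarianceFactor, serflingVarianceFactor]
    push_cast
    rw [show (N : ℝ) - (k + 1) = N - k - 1 by ring]
    field_simp
    ring
  have : (0 : ℝ) ≤ k / (N * (N - k) ^ 2 * (N - k - 1)) := by positivity
  linarith

lemma expect_exp_mul_serflingMartingale_insert_le (hx : ∀ i, x i ∈ Set.Icc a b)
    {T : Finset α} (hT : 1 < #Tᶜ) (t : ℝ) :
    𝔼 j ∈ Tᶜ, exp (t * serflingMartingale x (insert j T)) ≤
      exp (t * serflingMartingale x T) * exp ((b - a) ^ 2 * (t / (#Tᶜ - 1)) ^ 2 / 8) := by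
  calc 𝔼 j ∈ Tᶜ, exp (t * serflingMartingale x (insert j T))
      = 𝔼 j ∈ Tᶜ, exp (t * serflingMartingale x T) *
          exp (t / (#Tᶜ - 1) * (x j - 𝔼 i ∈ Tᶜ, x i)) := by
        refine expect_congr rfl fun j hj => ?_
        rw [serflingMartingale_insert x (mem_compl.1 hj) hT, ← exp_add]
        ring_nf
    _ = exp (t * serflingMartingale x T) *
          𝔼 j ∈ Tᶜ, exp (t / (#Tᶜ - 1) * (x j - 𝔼 i ∈ Tᶜ, x i)) :=
        (mul_expect _ _ _).symm
    _ ≤ _ := by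
        gcongr
        exact expect_exp_mul_sub_expect_le _ x (fun i _ => hx i) _

lemma expect_exp_mul_serflingMartingale_le (hx : ∀ i, x i ∈ Set.Icc a b) (t : ℝ) {k : ℕ}
    (hk : k < Fintype.card α) :
    𝔼 S ∈ univ.powersetCard k, exp (t * serflingMartingale x S) ≤
      exp ((b - a) ^ 2 * t ^ 2 * serflingVarianceFactor (Fintype.card α) k / 8) := by
  induction k with
  | zero => simp [serflingMartingale, serflingVarianceFactor]
  | succ k ih =>
    set N := Fintype.card α
    have hcompl : ∀ T ∈ (univ : Finset α).powersetCard k,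
        (#Tᶜ : ℝ) - 1 = N - k - 1 ∧ 1 < #Tᶜ := by
      intro T hT
      rw [mem_powersetCard_univ] at hT
      rw [card_compl, hT, Nat.cast_sub (by omega)]
      exact ⟨rfl, by omega⟩
    calc 𝔼 S ∈ univ.powersetCard (k + 1), exp (t * serflingMartingale x S)
        = 𝔼 T ∈ univ.powersetCard k, 𝔼 j ∈ Tᶜ, exp (t * serflingMartingale x (insert j T)) := by
          simp only [expect_powersetCard_succ, compl_eq_univ_sdiff]
      _ ≤ 𝔼 T ∈ univ.powersetCard k, exp (t * serflingMartingale x T) *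
            exp ((b - a) ^ 2 * (t / (N - k - 1)) ^ 2 / 8) := by
          refine expect_le_expect fun T hT => ?_
          rw [← (hcompl T hT).1]
          exact expect_exp_mul_serflingMartingale_insert_le hx (hcompl T hT).2 t
      _ = (𝔼 T ∈ univ.powersetCard k, exp (t * serflingMartingale x T)) *
            exp ((b - a) ^ 2 * (t / (N - k - 1)) ^ 2 / 8) := (expect_mul _ _ _).symm
      _ ≤ exp ((b - a) ^ 2 * t ^ 2 * serflingVarianceFactor N k / 8) *
            exp ((b - a) ^ 2 * (t / (N - k - 1)) ^ 2 / 8) := by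
          gcongr
          exact ih (by omega)
      _ = exp ((b - a) ^ 2 * t ^ 2 *
            (serflingVarianceFactor N k + 1 / ((N : ℝ) - k - 1) ^ 2) / 8) := by
          rw [← exp_add, div_pow]
          congr 1
          ring
      _ ≤ exp ((b - a) ^ 2 * t ^ 2 * serflingVarianceFactor N (k + 1) / 8) := by
          gcongr
          exact serflingVarianceFactor_add_le_succ hk

lemma card_filter_le_expect_sub_div_card_le_exp {n : ℕ} (hn1 : 1 ≤ n) (hn : n < Fintype.card α)
    (hab : a < b) (hx : ∀ i, x i ∈ Set.Icc a b) {ε : ℝ} (hε : 0 ≤ ε) :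
    (#{S ∈ (univ : Finset α).powersetCard n | ε ≤ 𝔼 i ∈ S, x i - 𝔼 i, x i} : ℝ) /
        #((univ : Finset α).powersetCard n) ≤
      exp (-2 * n * ε ^ 2 / ((1 - ((n : ℝ) - 1) / Fintype.card α) * (b - a) ^ 2)) := by
  set N := Fintype.card α
  have hNn : (0 : ℝ) < N - n := by
    rw [sub_pos]; exact_mod_cast hn
  have hN0 : (0 : ℝ) < N := by linarith [(Nat.cast_nonneg n : (0 : ℝ) ≤ n)]
  have hba : 0 < b - a := sub_pos.2 hab
  have hv : 0 < serflingVarianceFactor N n := by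
    have : (0 : ℝ) < n := by exact_mod_cast hn1
    exact div_pos (mul_pos this (by linarith)) (mul_pos hN0 (pow_pos hNn 2))
  set r := n * ε / (N - n) with hr
  calc (#{S ∈ (univ : Finset α).powersetCard n | ε ≤ 𝔼 i ∈ S, x i - 𝔼 i, x i} : ℝ) /
        #((univ : Finset α).powersetCard n)
      ≤ #{S ∈ univ.powersetCard n | r ≤ serflingMartingale x S} / #(univ.powersetCard n) := by
        refine div_le_div_of_nonneg_right (Nat.cast_le.2 (card_le_card
          (monotone_filter_right _ fun S hS hεS => ?_))) (Nat.cast_nonneg _)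
        have h := card_compl_mul_serflingMartingale x S
        rw [card_compl, (mem_powersetCard_univ.1 hS), Nat.cast_sub hn.le] at h
        rw [div_le_iff₀' hNn, h]
        gcongr
    _ ≤ exp (-r ^ 2 / (2 * ((b - a) ^ 2 * serflingVarianceFactor N n / 4))) :=
        card_filter_div_card_le_exp _ _ (div_pos (mul_pos (pow_pos hba 2) hv) four_pos)
          (fun t _ => (expect_exp_mul_serflingMartingale_le hx t hn).trans_eq (by congr 1; ring))
          (by positivity)
    _ = exp (-2 * n * ε ^ 2 / ((1 - ((n : ℝ) - 1) / N) * (b - a) ^ 2)) := by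
        congr 1
        rw [serflingVarianceFactor, hr, show 1 - ((n : ℝ) - 1) / N = (N - n + 1) / N by
          field_simp; ring]
        field_simp
        ring

end Serfling

/-- One-sided Hoeffding–Serfling bound for sampling without replacement: the probability
that the sample mean exceeds the population mean by at least `ε` is at most
`exp(−2nε² / ((1 − (n−1)/N)(b−a)²))`. -/
theorem hoeffding_serfling_one_sided
    (N n : ℕ) (hn1 : 1 ≤ n) (hnN : n ≤ N)
    (x : Fin N → ℝ) (a b : ℝ) (hab : a < b) (hx : ∀ i, a ≤ x i ∧ x i ≤ b)
    (ε : ℝ) (hε : 0 < ε) :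
    (PMF.uniformOfFinset ((univ : Finset (Fin N)).powersetCard n)
        (Finset.powersetCard_nonempty.mpr (by simpa using hnN))).toOuterMeasure
      {S : Finset (Fin N) |
        (1 / (n : ℝ)) * ∑ i ∈ S, x i - (1 / (N : ℝ)) * ∑ i, x i ≥ ε} ≤
    ENNReal.ofReal
      (Real.exp (-2 * n * ε ^ 2 / ((1 - ((n : ℝ) - 1) / N) * (b - a) ^ 2))) := by
  have hP : (0 : ℝ) < #((univ : Finset (Fin N)).powersetCard n) := by
    exact_mod_cast (powersetCard_nonempty.mpr (by simpa using hnN)).card_pos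
  rw [PMF.toOuterMeasure_uniformOfFinset_apply, ← ENNReal.ofReal_natCast,
    ← ENNReal.ofReal_natCast, ← ENNReal.ofReal_div_of_pos hP]
  refine ENNReal.ofReal_le_ofReal ?_
  have mem_event_iff : ∀ S ∈ (univ : Finset (Fin N)).powersetCard n,
      S ∈ {S : Finset (Fin N) | (1 / (n : ℝ)) * ∑ i ∈ S, x i - (1 / (N : ℝ)) * ∑ i, x i ≥ ε} ↔
        ε ≤ 𝔼 i ∈ S, x i - 𝔼 i, x i := fun S hS => by
    rw [mem_powersetCard_univ] at hS
    simp [expect_eq_sum_div_card, hS, div_eq_inv_mul]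
  rw [filter_congr mem_event_iff]
  rcases hnN.lt_or_eq with hlt | rfl
  · simpa using card_filter_le_expect_sub_div_card_le_exp hn1 (by simpa using hlt) hab hx hε.le
  · have hempty : {S ∈ (univ : Finset (Fin n)).powersetCard n |
        ε ≤ 𝔼 i ∈ S, x i - 𝔼 i, x i} = ∅ :=
      filter_eq_empty_iff.2 fun S hS => by
        simp [eq_univ_of_card S (by simpa using mem_powersetCard_univ.1 hS), hε]
    rw [hempty, card_empty, Nat.cast_zero, zero_div]
    positivity
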